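/- For every finite tree G, the first nonzero Steklov eigenvalue satisfies λ₂(G) ≤ 2/L, where L is the diameter of G. -/

import Mathlib

open Finset

attribute [local instance] Classical.propDecidable

namespace Steklov

variable {V : Type} [Fintype V] [DecidableEq V]

/-- The boundary of a graph: the set of vertices of degree one. -/
noncomputable def bdry (G : SimpleGraph V) : Finset V :=
  Finset.univ.filter (fun v => G.degree v = 1)

/-- The graph Laplacian `Δf(x) = Σ_{y∼x} (f x - f y)`. -/
noncomputable def lap (G : SimpleGraph V) (f : V → ℝ) (x : V) : ℝ :=
  ∑ y ∈ G.neighborFinset x, (f x - f y)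

/-- `f` is a Steklov eigenfunction of `G` with eigenvalue `lam`:
`f ≠ 0`, `Δf = 0` on the interior and `∂f/∂n = lam • f` on the boundary. -/
noncomputable def IsEigenpair (G : SimpleGraph V) (lam : ℝ) (f : V → ℝ) : Prop :=
  f ≠ 0 ∧ (∀ x, x ∉ bdry G → lap G f x = 0) ∧ ∀ x ∈ bdry G, lap G f x = lam * f x

/-- The first nonzero Steklov eigenvalue of `G`. -/
noncomputable def lambda2 (G : SimpleGraph V) : ℝ :=
  sInf {lam : ℝ | 0 < lam ∧ ∃ f : V → ℝ, IsEigenpair G lam f}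

/-- `f` is a `lam`-flow to `x` on `G`. -/
noncomputable def IsFlow (G : SimpleGraph V) (lam : ℝ) (x : V) (f : V → ℝ) : Prop :=
  f ≠ 0 ∧ (∀ w, w ∉ bdry G → w ≠ x → lap G f w = 0) ∧
    ∀ w ∈ bdry G, w ≠ x → lap G f w = lam * f w

/-- The Rayleigh quotient of `f` (sum over undirected edges in the numerator). -/
noncomputable def rayleigh (G : SimpleGraph V) (f : V → ℝ) : ℝ :=
  ((∑ x, ∑ y ∈ G.neighborFinset x, (f x - f y) ^ 2) / 2) / ∑ x ∈ bdry G, f x ^ 2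

/-- `Σ(G,x)`: the set of `lam ≥ 0` admitting a `lam`-flow `f` to `x` with `f x = 0`
which increases along edges pointing away from `x`. -/
def SigmaSet (G : SimpleGraph V) (x : V) : Set ℝ :=
  {lam | 0 ≤ lam ∧ ∃ f : V → ℝ, IsFlow G lam x f ∧ f x = 0 ∧
    ∀ y z : V, G.Adj y z → G.dist x z < G.dist x y → f z < f y}

/-- `Σ̂(G,x)`: the set of `lam ≥ 0` admitting a `lam`-flow `f` to `x` with `f x = 0`. -/
def SigmaHatSet (G : SimpleGraph V) (x : V) : Set ℝ :=
  {lam | 0 ≤ lam ∧ ∃ f : V → ℝ, IsFlow G lam x f ∧ f x = 0}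

/-- `σ(G,x) = inf Σ(G,x)`. -/
noncomputable def sigma (G : SimpleGraph V) (x : V) : ℝ := sInf (SigmaSet G x)

/-- `σ̂(G,x) = inf Σ̂(G,x)`. -/
noncomputable def sigmaHat (G : SimpleGraph V) (x : V) : ℝ := sInf (SigmaHatSet G x)

/-- The vertex set of the branch from `(u,v)`: the connected component of `u`
after deleting the edge between `u` and `v`. -/
def branchSet (G : SimpleGraph V) (u v : V) : Set V :=
  {w | (G.deleteEdges {s(u, v)}).Reachable u w}

/-- The vertex set of the subtree `H(u,v)` spanned by the branch from `(u,v)` together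
with `v`. -/
def branchClosed (G : SimpleGraph V) (u v : V) : Set V :=
  insert v (branchSet G u v)

/-- `σ(H(u,v), v)`, computed intrinsically in the subtree `H(u,v)`. -/
noncomputable def sigmaB (G : SimpleGraph V) (u v : V) : ℝ :=
  sigma (G.induce (branchClosed G u v)) ⟨v, Set.mem_insert _ _⟩

/-- The double `(G)²_x` of `G` at `x`: two disjoint copies of `G` with the two
copies of `x` identified. -/
def doubleAt (G : SimpleGraph V) (x : V) : SimpleGraph (V ⊕ {v : V // v ≠ x}) where
  Adj a b :=
    match a, b with
    | Sum.inl u, Sum.inl w => G.Adj u w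
    | Sum.inr u, Sum.inr w => G.Adj u.1 w.1
    | Sum.inl u, Sum.inr w => u = x ∧ G.Adj x w.1
    | Sum.inr u, Sum.inl w => w = x ∧ G.Adj x u.1
  symm := by
    constructor
    rintro (u | u) (w | w) h
    · exact h.symm
    · exact h
    · exact h
    · exact h.symm
  loopless := by
    constructor
    rintro (u | u) h
    · exact G.loopless.irrefl u h
    · exact G.loopless.irrefl u.1 h

end Steklov

/-!
The Steklov eigenvalues are the eigenvalues of the Dirichlet-to-Neumann operator acting on
functions on the leaves: extend harmonically to the interior and take the Laplacian at the
leaves. This operator is symmetric and positive, and its kernel consists of the constants, so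
every nonzero boundary function of mean zero bounds some positive eigenvalue by the Rayleigh
quotient of its harmonic extension.

For leaves `u`, `v` at distance `L` in a tree, `w ↦ d(u, w) - d(v, w)` is harmonic away from `u`
and `v`, where its Laplacian is `∓2`: each vertex other than `v` has exactly one neighbour closer
to `v`. Hence its Dirichlet energy is `4L`, while after subtracting its boundary mean its values
at `u` and `v` alone contribute at least `2L²` to the boundary norm.
-/

open scoped InnerProductSpace

theorem LinearMap.IsPositive.exists_hasEigenvalue_pos_mul_le {E : Type*} [NormedAddCommGroup E]
    [InnerProductSpace ℝ E] [FiniteDimensional ℝ E] {T : E →ₗ[ℝ] E} (hT : T.IsPositive)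
    {x : E} (hx0 : x ≠ 0) (hx : x ∈ (LinearMap.ker T)ᗮ) :
    ∃ μ, 0 < μ ∧ Module.End.HasEigenvalue T μ ∧ μ * ‖x‖ ^ 2 ≤ ⟪T x, x⟫_ℝ := by
  have hn : Module.finrank ℝ E = Module.finrank ℝ E := rfl
  set b := hT.isSymmetric.eigenvectorBasis hn
  set μ := hT.isSymmetric.eigenvalues hn with hμ
  set c := fun i => b.repr x i
  have hnorm : ‖x‖ ^ 2 = ∑ i, c i ^ 2 := by
    simp [← b.sum_sq_norm_inner_right, c, b.repr_apply_apply]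
  have hTx : ⟪T x, x⟫_ℝ = ∑ i, μ i * c i ^ 2 := by
    rw [← b.repr.inner_map_map, PiLp.inner_apply]
    refine Finset.sum_congr rfl fun i _ => ?_
    rw [hT.isSymmetric.eigenvectorBasis_apply_self_apply hn, ← hμ]
    simp [c]
    ring
  have hc : ∀ i, μ i = 0 → c i = 0 := fun i hi => by
    have hker : b i ∈ LinearMap.ker T := by
      rw [LinearMap.mem_ker, hT.isSymmetric.apply_eigenvectorBasis, ← hμ, hi]
      simp
    simpa [c, b.repr_apply_apply] using Submodule.inner_right_of_mem_orthogonal hker hx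
  obtain ⟨i, hci, hmin⟩ : ∃ i, c i ≠ 0 ∧ ∀ j, c j ≠ 0 → μ i ≤ μ j := by
    have hne : (Finset.univ.filter fun j => c j ≠ 0).Nonempty := by
      by_contra! h
      refine hx0 (b.repr.injective ?_)
      ext j
      simpa [c] using Finset.filter_eq_empty_iff.1 h (Finset.mem_univ j)
    obtain ⟨i, hi, hmin⟩ := Finset.exists_min_image _ μ hne
    exact ⟨i, (Finset.mem_filter.1 hi).2, fun j hj => hmin j (by simpa using hj)⟩
  refine ⟨μ i, (hT.nonneg_eigenvalues hn i).lt_of_ne' (mt (hc i) hci),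
    hT.isSymmetric.hasEigenvalue_eigenvalues hn i, ?_⟩
  rw [hnorm, hTx, Finset.mul_sum]
  refine Finset.sum_le_sum fun j _ => ?_
  by_cases hcj : c j = 0
  · simp [hcj]
  · exact mul_le_mul_of_nonneg_right (hmin j hcj) (sq_nonneg _)

namespace SimpleGraph

variable {V : Type*} {G : SimpleGraph V}

theorem IsTree.existsUnique_adj_dist_add_one_eq (hG : G.IsTree) {u x : V} (hxu : x ≠ u) :
    ∃! y, G.Adj x y ∧ G.dist u y + 1 = G.dist u x := by
  have hshort (y : V) (hxy : G.Adj x y) (q : G.Walk y u) (hq : q.length = G.dist u y)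
      (hy : G.dist u y + 1 = G.dist u x) : (Walk.cons hxy q).IsPath :=
    Walk.isPath_of_length_eq_dist _ (by rw [Walk.length_cons, hq, hy, dist_comm])
  obtain ⟨p, hp⟩ := hG.connected.exists_walk_length_eq_dist x u
  cases p with
  | nil => exact absurd rfl hxu
  | @cons _ y _ hxy q =>
    have hq : q.length = G.dist u y := by
      have h₁ : G.dist y u ≤ q.length := dist_le q
      have h₂ : G.dist x u ≤ G.dist x y + G.dist y u := hG.connected.dist_triangle
      rw [Walk.length_cons] at hp
      rw [dist_eq_one_iff_adj.2 hxy] at h₂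
      rw [dist_comm]
      omega
    have hy : G.dist u y + 1 = G.dist u x := by rw [← hq, ← Walk.length_cons hxy, hp, dist_comm]
    refine ⟨y, ⟨hxy, hy⟩, fun z ⟨hxz, hz⟩ => ?_⟩
    obtain ⟨r, hr⟩ := hG.connected.exists_walk_length_eq_dist z u
    rw [dist_comm] at hr
    have := hG.isAcyclic.subsingleton_path x u
    simpa using congr_arg (fun P : G.Path x u => P.1.snd)
      (Subsingleton.elim ⟨_, hshort z hxz r hr hz⟩ ⟨_, hshort y hxy q hq hy⟩)

theorem IsTree.degree_eq_one_of_dist_eq_diam [Fintype V] (hG : G.IsTree) (hdiam : G.diam ≠ 0)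
    {u v : V} (huv : G.dist u v = G.diam) : G.degree v = 1 := by
  have hvu : v ≠ u := by
    rintro rfl
    rw [dist_self] at huv
    exact hdiam huv.symm
  obtain ⟨p, ⟨hvp, hp⟩, huniq⟩ := hG.existsUnique_adj_dist_add_one_eq hvu
  rw [← card_neighborFinset_eq_degree, Finset.card_eq_one]
  refine ⟨p, Finset.eq_singleton_iff_unique_mem.2
    ⟨(mem_neighborFinset _ _ _).2 hvp, fun z hz => ?_⟩⟩
  rw [mem_neighborFinset] at hz
  refine huniq z ⟨hz, ?_⟩
  have := dist_le_diam (ediam_ne_top_of_diam_ne_zero hdiam) (u := u) (v := z)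
  have := hG.dist_eq_dist_add_one_of_adj u hz
  omega

end SimpleGraph

namespace Steklov

open Finset Matrix SimpleGraph

variable {V : Type} [Fintype V] {G : SimpleGraph V}

theorem lap_eq_lapMatrix_mulVec (G : SimpleGraph V) (f : V → ℝ) :
    lap G f = G.lapMatrix ℝ *ᵥ f := by
  ext x
  rw [lapMatrix_mulVec_apply, lap, sum_sub_distrib, sum_const, card_neighborFinset_eq_degree,
    nsmul_eq_mul]

theorem mem_bdry {x : V} : x ∈ bdry G ↔ G.degree x = 1 := by
  simp [bdry]

theorem lap_sub (G : SimpleGraph V) (f g : V → ℝ) : lap G (f - g) = lap G f - lap G g := by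
  simp only [lap_eq_lapMatrix_mulVec, mulVec_sub]

theorem lap_sub_const (G : SimpleGraph V) (f : V → ℝ) (c : ℝ) :
    lap G (fun x => f x - c) = lap G f := by
  ext x
  simp [lap]

theorem dotProduct_lap_comm (G : SimpleGraph V) (f g : V → ℝ) :
    f ⬝ᵥ lap G g = g ⬝ᵥ lap G f := by
  rw [lap_eq_lapMatrix_mulVec, lap_eq_lapMatrix_mulVec, ← dotProduct_transpose_mulVec,
    (isSymm_lapMatrix ℝ G).eq]

theorem dotProduct_lap_self_nonneg (G : SimpleGraph V) (f : V → ℝ) :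
    0 ≤ f ⬝ᵥ lap G f := by
  simpa [lap_eq_lapMatrix_mulVec] using (posSemidef_lapMatrix ℝ G).dotProduct_mulVec_nonneg f

theorem eq_of_dotProduct_lap_self_eq_zero (hG : G.Connected) {f : V → ℝ}
    (hf : f ⬝ᵥ lap G f = 0) (x y : V) : f x = f y := by
  rw [lap_eq_lapMatrix_mulVec, ← toLinearMap₂'_apply',
    lapMatrix_toLinearMap₂'_apply'_eq_zero_iff_forall_reachable] at hf
  exact hf x y (hG.preconnected x y)

theorem rayleigh_eq (G : SimpleGraph V) (f : V → ℝ) :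
    rayleigh G f = f ⬝ᵥ lap G f / ∑ x ∈ bdry G, f x ^ 2 := by
  rw [lap_eq_lapMatrix_mulVec, ← toLinearMap₂'_apply', lapMatrix_toLinearMap₂', rayleigh]
  simp_rw [neighborFinset_eq_filter, sum_filter]

theorem dotProduct_lap_eq_sum_bdry {f : V → ℝ} (hf : ∀ x ∉ bdry G, lap G f x = 0)
    (g : V → ℝ) :
    g ⬝ᵥ lap G f = ∑ x ∈ bdry G, g x * lap G f x :=
  (sum_subset (subset_univ _) fun x _ hx => by rw [hf x hx, mul_zero]).symm

variable (G) in
/-- Bijectivity of this map is the unique solvability of the Dirichlet problem: prescribed values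
on the leaves, prescribed Laplacian at the interior vertices. -/
noncomputable def dirichletMap :
    (V → ℝ) →ₗ[ℝ] (bdry G → ℝ) × ({x // x ∉ bdry G} → ℝ) :=
  (LinearMap.funLeft ℝ ℝ Subtype.val).prod
    (LinearMap.funLeft ℝ ℝ Subtype.val ∘ₗ (G.lapMatrix ℝ).mulVecLin)

theorem dirichletMap_apply (f : V → ℝ) :
    dirichletMap G f = (fun i : bdry G => f i, fun j : {x // x ∉ bdry G} => lap G f j) := by
  rw [lap_eq_lapMatrix_mulVec]
  rfl

theorem dirichletMap_injective (hG : G.Connected) (hB : (bdry G).Nonempty) :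
    Function.Injective (dirichletMap G) := by
  refine (injective_iff_map_eq_zero _).2 fun f hf => ?_
  simp only [dirichletMap_apply, Prod.mk_eq_zero, funext_iff, Pi.zero_apply, Subtype.forall] at hf
  obtain ⟨hfB, hf_int⟩ := hf
  have hE : f ⬝ᵥ lap G f = 0 := by
    rw [dotProduct_lap_eq_sum_bdry hf_int]
    exact sum_eq_zero fun x hx => by rw [hfB x hx, zero_mul]
  obtain ⟨b, hb⟩ := hB
  ext x
  rw [eq_of_dotProduct_lap_self_eq_zero hG hE x b, hfB b hb, Pi.zero_apply]

theorem dirichletMap_bijective (hG : G.Connected) (hB : (bdry G).Nonempty) :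
    Function.Bijective (dirichletMap G) := by
  have hdim : Module.finrank ℝ (V → ℝ) =
      Module.finrank ℝ ((bdry G → ℝ) × ({x // x ∉ bdry G} → ℝ)) := by
    simp only [Module.finrank_prod, Module.finrank_fintype_fun_eq_card,
      Fintype.card_subtype_compl, Fintype.card_coe]
    have := card_le_univ (bdry G)
    omega
  have hinj := dirichletMap_injective hG hB
  exact ⟨hinj, (LinearMap.injective_iff_surjective_of_finrank_eq_finrank hdim).1 hinj⟩

noncomputable def harmonicExt (hG : G.Connected) (hB : (bdry G).Nonempty) :
    (bdry G → ℝ) →ₗ[ℝ] V → ℝ :=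
  (LinearEquiv.ofBijective _ (dirichletMap_bijective hG hB)).symm.toLinearMap ∘ₗ
    LinearMap.inl ℝ _ _

section HarmonicExt

variable (hG : G.Connected) (hB : (bdry G).Nonempty) (φ : bdry G → ℝ)

theorem dirichletMap_harmonicExt : dirichletMap G (harmonicExt hG hB φ) = (φ, 0) :=
  (LinearEquiv.ofBijective _ (dirichletMap_bijective hG hB)).apply_symm_apply _

theorem harmonicExt_apply_coe (i : bdry G) : harmonicExt hG hB φ i = φ i := by
  simpa [dirichletMap_apply] using
    congr_fun (congr_arg Prod.fst (dirichletMap_harmonicExt hG hB φ)) i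

theorem lap_harmonicExt {x : V} (hx : x ∉ bdry G) : lap G (harmonicExt hG hB φ) x = 0 := by
  simpa [dirichletMap_apply] using
    congr_fun (congr_arg Prod.snd (dirichletMap_harmonicExt hG hB φ)) ⟨x, hx⟩

end HarmonicExt

theorem harmonicExt_restrict (hG : G.Connected) (hB : (bdry G).Nonempty) {f : V → ℝ}
    (hf : ∀ x ∉ bdry G, lap G f x = 0) : harmonicExt hG hB (fun i => f i) = f := by
  refine dirichletMap_injective hG hB ?_
  rw [dirichletMap_harmonicExt, dirichletMap_apply]
  exact Prod.ext rfl (funext fun j => (hf j j.2).symm)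

noncomputable def dirichletToNeumann (hG : G.Connected) (hB : (bdry G).Nonempty) :
    EuclideanSpace ℝ (bdry G) →ₗ[ℝ] EuclideanSpace ℝ (bdry G) :=
  (WithLp.linearEquiv 2 ℝ (bdry G → ℝ)).symm.toLinearMap ∘ₗ
    LinearMap.funLeft ℝ ℝ Subtype.val ∘ₗ (G.lapMatrix ℝ).mulVecLin ∘ₗ
    harmonicExt hG hB ∘ₗ (WithLp.linearEquiv 2 ℝ (bdry G → ℝ)).toLinearMap

section DirichletToNeumann

variable (hG : G.Connected) (hB : (bdry G).Nonempty)

theorem dirichletToNeumann_apply (φ : EuclideanSpace ℝ (bdry G)) (i : bdry G) :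
    dirichletToNeumann hG hB φ i = lap G (harmonicExt hG hB φ.ofLp) i := by
  rw [lap_eq_lapMatrix_mulVec]
  rfl

theorem inner_dirichletToNeumann (φ ψ : EuclideanSpace ℝ (bdry G)) :
    ⟪dirichletToNeumann hG hB φ, ψ⟫_ℝ =
      harmonicExt hG hB ψ.ofLp ⬝ᵥ lap G (harmonicExt hG hB φ.ofLp) := by
  rw [dotProduct_lap_eq_sum_bdry fun x hx => lap_harmonicExt hG hB _ hx, ← sum_coe_sort,
    PiLp.inner_apply]
  refine sum_congr rfl fun i _ => ?_
  rw [dirichletToNeumann_apply, harmonicExt_apply_coe]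
  simp

theorem isPositive_dirichletToNeumann : (dirichletToNeumann hG hB).IsPositive := by
  refine ⟨fun φ ψ => ?_, fun φ => ?_⟩
  · rw [real_inner_comm (dirichletToNeumann hG hB ψ), inner_dirichletToNeumann,
      inner_dirichletToNeumann, dotProduct_lap_comm]
  · rw [RCLike.re_to_real, inner_dirichletToNeumann]
    exact dotProduct_lap_self_nonneg G _

theorem mem_orthogonal_ker_dirichletToNeumann {φ : EuclideanSpace ℝ (bdry G)}
    (hφ : ∑ i, φ i = 0) : φ ∈ (LinearMap.ker (dirichletToNeumann hG hB))ᗮ := by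
  refine (Submodule.mem_orthogonal _ _).2 fun ψ hψ => ?_
  have hE : harmonicExt hG hB ψ.ofLp ⬝ᵥ lap G (harmonicExt hG hB ψ.ofLp) = 0 := by
    rw [← inner_dirichletToNeumann, LinearMap.mem_ker.1 hψ, inner_zero_left]
  have ⟨b, hb⟩ := hB
  have hψ_const (i : bdry G) : ψ i = harmonicExt hG hB ψ.ofLp b := by
    rw [← harmonicExt_apply_coe hG ⟨b, hb⟩ ψ.ofLp i]
    exact eq_of_dotProduct_lap_self_eq_zero hG hE i b
  simp only [PiLp.inner_apply, hψ_const, RCLike.inner_apply, conj_trivial]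
  rw [← sum_mul, hφ, zero_mul]

theorem isEigenpair_harmonicExt {μ : ℝ} {ψ : EuclideanSpace ℝ (bdry G)}
    (hψ : Module.End.HasEigenvector (dirichletToNeumann hG hB) μ ψ) :
    IsEigenpair G μ (harmonicExt hG hB ψ.ofLp) := by
  refine ⟨fun h0 => hψ.2 ?_, fun x hx => lap_harmonicExt hG hB _ hx, fun x hx => ?_⟩
  · ext i
    simpa [h0] using (harmonicExt_apply_coe hG hB ψ.ofLp i).symm
  · have := congr_arg (· ⟨x, hx⟩) hψ.apply_eq_smul
    simp only [dirichletToNeumann_apply] at this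
    rw [this, harmonicExt_apply_coe hG hB ψ.ofLp ⟨x, hx⟩]
    rfl

end DirichletToNeumann

theorem lambda2_le_rayleigh (hG : G.Connected) {f : V → ℝ}
    (hf : ∀ x ∉ bdry G, lap G f x = 0)
    (hmean : ∑ x ∈ bdry G, f x = 0) (hne : ∃ x ∈ bdry G, f x ≠ 0) :
    lambda2 G ≤ rayleigh G f := by
  obtain ⟨b, hb, hfb⟩ := hne
  have hB : (bdry G).Nonempty := ⟨b, hb⟩
  set φ : EuclideanSpace ℝ (bdry G) := WithLp.toLp 2 fun i => f i
  have hφ0 : φ ≠ 0 := fun h => hfb (by simpa [φ] using congr_arg (· ⟨b, hb⟩) h)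
  have hφ_mean : ∑ i, φ i = 0 := by simpa [φ, sum_attach (bdry G) f] using hmean
  obtain ⟨μ, hμ, heig, hle⟩ := LinearMap.IsPositive.exists_hasEigenvalue_pos_mul_le
    (isPositive_dirichletToNeumann hG hB) hφ0
    (mem_orthogonal_ker_dirichletToNeumann hG hB hφ_mean)
  obtain ⟨ψ, hψ⟩ := heig.exists_hasEigenvector
  have hlam : lambda2 G ≤ μ :=
    csInf_le ⟨0, fun _ h => h.1.le⟩ ⟨hμ, _, isEigenpair_harmonicExt hG hB hψ⟩
  have hnorm : ‖φ‖ ^ 2 = ∑ x ∈ bdry G, f x ^ 2 := by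
    simp [φ, EuclideanSpace.norm_sq_eq, sum_attach (bdry G) fun x => f x ^ 2]
  have hinner : ⟪dirichletToNeumann hG hB φ, φ⟫_ℝ = f ⬝ᵥ lap G f := by
    rw [inner_dirichletToNeumann, harmonicExt_restrict hG hB hf]
  have hpos : 0 < ∑ x ∈ bdry G, f x ^ 2 := by
    rw [← hnorm]
    exact pow_pos (norm_pos_iff.2 hφ0) 2
  rw [rayleigh_eq, le_div_iff₀ hpos, ← hnorm, ← hinner]
  exact (mul_le_mul_of_nonneg_right hlam (sq_nonneg _)).trans hle

theorem lap_dist_self (G : SimpleGraph V) (v : V) :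
    lap G (fun w => (G.dist v w : ℝ)) v = -G.degree v := by
  have hnear : ∀ y ∈ G.neighborFinset v, (G.dist v v : ℝ) - G.dist v y = -1 := fun y hy => by
    rw [SimpleGraph.dist_self, dist_eq_one_iff_adj.2 ((mem_neighborFinset _ _ _).1 hy)]
    norm_num
  rw [lap, sum_congr rfl hnear, sum_const, card_neighborFinset_eq_degree, nsmul_eq_mul, mul_neg_one]

theorem lap_dist_of_ne (hG : G.IsTree) {v x : V} (hxv : x ≠ v) :
    lap G (fun w => (G.dist v w : ℝ)) x = 2 - G.degree x := by
  obtain ⟨p, ⟨hxp, hp⟩, huniq⟩ := hG.existsUnique_adj_dist_add_one_eq hxv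
  have hpN : p ∈ G.neighborFinset x := (mem_neighborFinset _ _ _).2 hxp
  have hfar : ∀ y ∈ (G.neighborFinset x).erase p, (G.dist v x : ℝ) - G.dist v y = -1 := by
    intro y hy
    obtain ⟨hyp, hxy⟩ := mem_erase.1 hy
    rw [mem_neighborFinset] at hxy
    rcases hG.dist_eq_dist_add_one_of_adj v hxy with h | h
    · exact absurd (huniq y ⟨hxy, h.symm⟩) hyp
    · rw [h]; push_cast; ring
  rw [lap, ← add_sum_erase _ _ hpN, sum_congr rfl hfar, sum_const, card_erase_of_mem hpN,
    card_neighborFinset_eq_degree, ← hp, nsmul_eq_mul,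
    Nat.cast_pred (card_pos.2 ⟨p, hpN⟩ |>.trans_eq (card_neighborFinset_eq_degree G x))]
  push_cast
  ring

theorem lap_dist_sub_dist (hG : G.IsTree) {u v : V} (huv : u ≠ v) (x : V) :
    lap G (fun w => (G.dist u w : ℝ) - G.dist v w) x =
      if x = u then -2 else if x = v then 2 else 0 := by
  rw [show (fun w => (G.dist u w : ℝ) - G.dist v w) =
    (fun w => (G.dist u w : ℝ)) - fun w => (G.dist v w : ℝ) from rfl, lap_sub, Pi.sub_apply]
  split_ifs with hxu hxv
  · subst hxu
    rw [lap_dist_self, lap_dist_of_ne hG huv]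
    ring
  · subst hxv
    rw [lap_dist_self, lap_dist_of_ne hG (Ne.symm huv)]
    ring
  · rw [lap_dist_of_ne hG hxu, lap_dist_of_ne hG hxv, sub_self]

theorem lambda2_le_two_div_dist (hG : G.IsTree) {u v : V} (hu : u ∈ bdry G) (hv : v ∈ bdry G)
    (huv : u ≠ v) : lambda2 G ≤ 2 / (G.dist u v : ℝ) := by
  set d : ℝ := (G.dist u v : ℝ)
  have hd : 0 < d := Nat.cast_pos.2 (hG.connected.pos_dist_of_ne huv)
  set h : V → ℝ := fun w => (G.dist u w : ℝ) - G.dist v w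
  set c := (∑ x ∈ bdry G, h x) / #(bdry G)
  set f : V → ℝ := fun w => h w - c
  have hlap (x : V) : lap G f x = if x = u then -2 else if x = v then 2 else 0 := by
    rw [lap_sub_const]
    exact lap_dist_sub_dist hG huv x
  have hfu : f u = -d - c := by simp [f, h, d, dist_comm]
  have hfv : f v = d - c := by simp [f, h, d]
  have hharm : ∀ x ∉ bdry G, lap G f x = 0 := fun x hx => by
    rw [hlap, if_neg (ne_of_mem_of_not_mem hu hx).symm,
      if_neg (ne_of_mem_of_not_mem hv hx).symm]
  have hmean : ∑ x ∈ bdry G, f x = 0 := by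
    rw [sum_sub_distrib, sum_const, nsmul_eq_mul,
      mul_div_cancel₀ _ (Nat.cast_ne_zero.2 (card_ne_zero_of_mem hu)), sub_self]
  have hne : ∃ x ∈ bdry G, f x ≠ 0 := by
    by_contra! h0
    linarith [h0 u hu, h0 v hv]
  have henergy : f ⬝ᵥ lap G f = 4 * d := by
    rw [dotProduct, Fintype.sum_eq_add u v huv fun x hx => by
      rw [hlap, if_neg hx.1, if_neg hx.2, mul_zero]]
    rw [hlap, hlap, if_pos rfl, if_neg huv.symm, if_pos rfl, hfu, hfv]
    ring
  have hbdry : 2 * d ^ 2 ≤ ∑ x ∈ bdry G, f x ^ 2 := calc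
    2 * d ^ 2 ≤ f u ^ 2 + f v ^ 2 := by rw [hfu, hfv]; nlinarith [sq_nonneg c]
    _ = ∑ x ∈ {u, v}, f x ^ 2 := (sum_pair (f := fun x => f x ^ 2) huv).symm
    _ ≤ ∑ x ∈ bdry G, f x ^ 2 :=
      sum_le_sum_of_subset_of_nonneg (insert_subset hu (singleton_subset_iff.2 hv))
        fun _ _ _ => sq_nonneg _
  calc lambda2 G ≤ rayleigh G f := lambda2_le_rayleigh hG.connected hharm hmean hne
    _ = 4 * d / ∑ x ∈ bdry G, f x ^ 2 := by rw [rayleigh_eq, henergy]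
    _ ≤ 4 * d / (2 * d ^ 2) := by gcongr
    _ = 2 / d := by field_simp; ring

variable [DecidableEq V]

/-- For every finite tree `G` of diameter `L`: `λ₂(G) ≤ 2 / L`. -/
theorem lambda2_le_two_div_diam (G : SimpleGraph V) (hG : G.IsTree)
    (hcard : 2 ≤ Fintype.card V) :
    lambda2 G ≤ 2 / (G.diam : ℝ) := by
  have : Nontrivial V := Fintype.one_lt_card_iff_nontrivial.1 hcard
  have hdiam : G.diam ≠ 0 :=
    diam_ne_zero_of_ediam_ne_top (connected_iff_ediam_ne_top.1 hG.connected)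
  obtain ⟨u, v, huv⟩ := G.exists_dist_eq_diam
  have hne : u ≠ v := by
    rintro rfl
    exact hdiam (huv.symm.trans SimpleGraph.dist_self)
  rw [← huv]
  exact lambda2_le_two_div_dist hG (mem_bdry.2 (hG.degree_eq_one_of_dist_eq_diam hdiam
    (dist_comm.trans huv))) (mem_bdry.2 (hG.degree_eq_one_of_dist_eq_diam hdiam huv)) hne
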